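/- Let (φ_n) be a sequence of functions from a set S to ℝ that is uniformly Cauchy with a fixed convergence rate: |φ_n(s) − φ_m(s)| ≤ 2^{-min(n,m)} for all n, m and s ∈ S. Then there exists a continuous function θ : ℝ^ℕ → ℝ, depending only on the rate (not on the φ_n or S), such that θ(φ_0(s), φ_1(s), …) = lim_n φ_n(s) for every s ∈ S. -/

import Mathlib

/-!
Telescope `θ x = x 0 + ∑ (x (n+1) - x n)`, but clamp the `n`-th difference to `[-u n, u n]`
for a summable rate `u`. The clamped series converges uniformly on all of `ℝ^ℕ`, so `θ` is
continuous; on a sequence whose consecutive differences respect the rate the clamps do nothing,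
and the partial sums are exactly the terms of the sequence.
-/

open Filter Topology

noncomputable section

def symmClamp (r t : ℝ) : ℝ :=
  max (-r) (min t r)

lemma abs_symmClamp_le {r : ℝ} (hr : 0 ≤ r) (t : ℝ) : |symmClamp r t| ≤ r :=
  abs_le.2 ⟨le_max_left _ _, max_le (by linarith) (min_le_right _ _)⟩

lemma symmClamp_of_abs_le {r t : ℝ} (h : |t| ≤ r) : symmClamp r t = t := by
  rw [symmClamp, min_eq_left (abs_le.1 h).2, max_eq_right (abs_le.1 h).1]

lemma continuous_symmClamp (r : ℝ) : Continuous (symmClamp r) :=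
  continuous_const.max (continuous_id.min continuous_const)

def forcedLimit (u : ℕ → ℝ) (x : ℕ → ℝ) : ℝ :=
  x 0 + ∑' n, symmClamp (u n) (x (n + 1) - x n)

variable {u : ℕ → ℝ}

theorem continuous_forcedLimit (hu : Summable u) (hu_nonneg : ∀ n, 0 ≤ u n) :
    Continuous (forcedLimit u) := by
  refine (continuous_apply 0).add (continuous_tsum (fun n => ?_) hu fun n x => ?_)
  · exact (continuous_symmClamp _).comp ((continuous_apply _).sub (continuous_apply _))
  · simpa using abs_symmClamp_le (hu_nonneg n) _

theorem tendsto_forcedLimit (hu : Summable u) {x : ℕ → ℝ}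
    (hx : ∀ n, |x (n + 1) - x n| ≤ u n) : Tendsto x atTop (𝓝 (forcedLimit u x)) := by
  have hclamp : (fun n => symmClamp (u n) (x (n + 1) - x n)) = fun n => x (n + 1) - x n :=
    funext fun n => symmClamp_of_abs_le (hx n)
  have hsum : Summable fun n => x (n + 1) - x n :=
    .of_norm_bounded hu fun n => by simpa using hx n
  have hpartial := hsum.hasSum.tendsto_sum_nat.const_add (x 0)
  simp only [Finset.sum_range_sub, add_sub_cancel] at hpartial
  rwa [forcedLimit, hclamp]

end

lemma summable_two_zpow_neg : Summable fun n : ℕ => (2 : ℝ) ^ (-(n : ℤ)) := by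
  simpa [zpow_neg, inv_pow] using summable_geometric_two

/-- Forced limits: there is a single continuous `θ : ℝ^ℕ → ℝ`, depending only on the
convergence rate `2^{-min(n,m)}`, that computes the limit of any uniformly Cauchy
sequence of real-valued functions with that rate. -/
theorem forced_limit :
    ∃ θ : (ℕ → ℝ) → ℝ, Continuous θ ∧
      ∀ (S : Type) (φ : ℕ → S → ℝ),
        (∀ n m : ℕ, ∀ s : S, |φ n s - φ m s| ≤ (2:ℝ) ^ (-(min n m : ℤ))) →
        ∀ s : S, Tendsto (fun n => φ n s) atTop (𝓝 (θ (fun n => φ n s))) := by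
  refine ⟨forcedLimit fun n => (2 : ℝ) ^ (-(n : ℤ)),
    continuous_forcedLimit summable_two_zpow_neg fun n => by positivity, ?_⟩
  intro S φ hφ s
  refine tendsto_forcedLimit summable_two_zpow_neg fun n => ?_
  simpa using hφ (n + 1) n s
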